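/- arXiv:math/0702411 — 3 statements merged into one kernel-verified Lean document; each statement's English description precedes it below -/
import Mathlib

section
/- With notation as above (θ_k = Σᵢ(λ₁/λᵢ)^k, θ₂ = (λ₁σ)², 1 ≤ θ_k ≤ θ₂), for all s ∈ (0,1) we have 0 ≤ F(s) - s²/2 ≤ Σ_{k≥3} s^k/(k θ₂^{(k-2)/2}), where F(s) = -st/σ - Σᵢ log(1 - s/(λᵢσ)). -/
open Finset

/-- With `θ_k = ∑ᵢ(λ₁/λᵢ)^k`, `θ₂ = (λ₁σ)²`, for all `s ∈ (0,1)` the function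
`F(s) = -st/σ - ∑ᵢ log(1 - s/(λᵢσ))` satisfies
`0 ≤ F(s) - s²/2 ≤ ∑_{k≥3} s^k/(k θ₂^{(k-2)/2})`. -/
theorem F_minus_half_sq_bounds (m : ℕ) (hm : 0 < m) (lam : Fin m → ℝ)
    (hpos : ∀ i, 0 < lam i) (hmono : Monotone lam)
    (t σ : ℝ) (hσ0 : 0 < σ)
    (ht : t = ∑ i, 1 / lam i) (hσ : σ ^ 2 = ∑ i, 1 / lam i ^ 2)
    (θ : ℕ → ℝ) (hθ : ∀ k, θ k = ∑ i, (lam ⟨0, hm⟩ / lam i) ^ k)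
    (F : ℝ → ℝ)
    (hF : ∀ s, F s = -(s * t / σ) - ∑ i, Real.log (1 - s / (lam i * σ))) :
    ∀ s : ℝ, 0 < s → s < 1 →
      0 ≤ F s - s ^ 2 / 2 ∧
      F s - s ^ 2 / 2 ≤
        ∑' k : ℕ, s ^ (k + 3) / ((k + 3) * θ 2 ^ (((k : ℝ) + 1) / 2)) := by
  intro s hs0 hs1
  set i0 : Fin m := ⟨0, hm⟩ with hi0
  have hl1 : 0 < lam i0 := hpos i0
  set c : ℝ := lam i0 * σ with hc
  have hc0 : 0 < c := mul_pos hl1 hσ0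
  have hθ2 : θ 2 = c ^ 2 := by
    rw [hθ, hc, mul_pow, hσ, Finset.mul_sum]
    refine Finset.sum_congr rfl fun i _ => ?_
    have := (hpos i).ne'
    field_simp
  have hθ2_ge : 1 ≤ θ 2 := by
    rw [hθ]
    have h1 : ((lam i0 / lam i0) ^ 2 : ℝ) = 1 := by
      rw [div_self hl1.ne']; norm_num
    calc (1 : ℝ) = (lam i0 / lam i0) ^ 2 := h1.symm
      _ ≤ ∑ i, (lam i0 / lam i) ^ 2 :=
        Finset.single_le_sum (f := fun i => (lam i0 / lam i) ^ 2)
          (fun i _ => sq_nonneg _) (Finset.mem_univ i0)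
  have hc1 : 1 ≤ c := by nlinarith [hθ2, hθ2_ge]
  set u : Fin m → ℝ := fun i => s / (lam i * σ) with hu
  have hli : ∀ i, lam i0 ≤ lam i := fun i => hmono (by simp [hi0, Fin.le_def])
  have hu_pos : ∀ i, 0 < u i := fun i => div_pos hs0 (mul_pos (hpos i) hσ0)
  have hu_le : ∀ i, u i ≤ s / c := fun i =>
    div_le_div_of_nonneg_left hs0.le hc0 (by
      exact mul_le_mul_of_nonneg_right (hli i) hσ0.le)
  have hsc_lt : s / c < 1 := by
    rw [div_lt_one hc0]; linarith
  have hu_lt1 : ∀ i, |u i| < 1 := fun i => by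
    rw [abs_of_pos (hu_pos i)]
    exact lt_of_le_of_lt (hu_le i) hsc_lt
  -- per-i HasSum of the tail series
  have hsum_i : ∀ i : Fin m, HasSum (fun n : ℕ => u i ^ (n + 3) / ((n : ℝ) + 3))
      (-Real.log (1 - u i) - (u i + u i ^ 2 / 2)) := by
    intro i
    have base := Real.hasSum_pow_div_log_of_abs_lt_one (hu_lt1 i)
    have key := (hasSum_nat_add_iff'
      (f := fun n : ℕ => u i ^ (n + 1) / ((n : ℝ) + 1)) 2).mpr base
    simp only [Finset.sum_range_succ, Finset.sum_range_zero] at key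
    convert key using 2 with n
    · rfl
    · push_cast; ring_nf
    · push_cast; ring_nf
  have hA : HasSum (fun n : ℕ => ∑ i, u i ^ (n + 3) / ((n : ℝ) + 3))
      (F s - s ^ 2 / 2) := by
    have h := hasSum_sum (f := fun (i : Fin m) (n : ℕ) => u i ^ (n + 3) / ((n : ℝ) + 3))
      (s := Finset.univ) (fun i _ => hsum_i i)
    have h1 : ∑ i, u i = s * t / σ := by
      rw [ht, Finset.mul_sum, Finset.sum_div]
      refine Finset.sum_congr rfl fun i _ => ?_
      have := (hpos i).ne'
      simp only [hu]
      field_simp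
    have h2 : ∑ i, u i ^ 2 = s ^ 2 := by
      have e : ∑ i, u i ^ 2 = s ^ 2 / σ ^ 2 * ∑ i, 1 / lam i ^ 2 := by
        rw [Finset.mul_sum]
        refine Finset.sum_congr rfl fun i _ => ?_
        have := (hpos i).ne'
        simp only [hu]
        field_simp
      rw [e, ← hσ]
      field_simp
    have h3 : ∑ i, (-Real.log (1 - u i) - (u i + u i ^ 2 / 2)) = F s - s ^ 2 / 2 := by
      rw [Finset.sum_sub_distrib, Finset.sum_add_distrib, Finset.sum_neg_distrib,
        h1, ← Finset.sum_div, h2, hF]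
      ring
    rwa [h3] at h
  have ha_nonneg : ∀ n : ℕ, 0 ≤ ∑ i, u i ^ (n + 3) / ((n : ℝ) + 3) :=
    fun n => Finset.sum_nonneg fun i _ => div_nonneg (pow_nonneg (hu_pos i).le _) (by positivity)
  -- the term-wise bound
  have hrp : ∀ n : ℕ, θ 2 ^ (((n : ℝ) + 1) / 2) = c ^ (n + 1) := by
    intro n
    rw [hθ2, ← Real.rpow_natCast c 2, ← Real.rpow_mul hc0.le, ← Real.rpow_natCast c (n + 1)]
    congr 1
    push_cast
    ring
  have hab : ∀ n : ℕ, ∑ i, u i ^ (n + 3) / ((n : ℝ) + 3) ≤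
      s ^ (n + 3) / (((n : ℝ) + 3) * θ 2 ^ (((n : ℝ) + 1) / 2)) := by
    intro n
    have hsumu : ∑ i, u i ^ (n + 3) ≤ s ^ (n + 3) / c ^ (n + 1) := by
      have step : ∀ i : Fin m, u i ^ (n + 3) ≤ u i ^ 2 * (s / c) ^ (n + 1) := by
        intro i
        have : u i ^ (n + 3) = u i ^ 2 * u i ^ (n + 1) := by ring
        rw [this]
        exact mul_le_mul_of_nonneg_left
          (pow_le_pow_left₀ (hu_pos i).le (hu_le i) _) (sq_nonneg _)
      calc ∑ i, u i ^ (n + 3) ≤ ∑ i, u i ^ 2 * (s / c) ^ (n + 1) :=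
            Finset.sum_le_sum fun i _ => step i
        _ = (∑ i, u i ^ 2) * (s / c) ^ (n + 1) := by rw [Finset.sum_mul]
        _ = s ^ 2 * (s / c) ^ (n + 1) := by
            congr 1
            have e : ∑ i, u i ^ 2 = s ^ 2 / σ ^ 2 * ∑ i, 1 / lam i ^ 2 := by
              rw [Finset.mul_sum]
              refine Finset.sum_congr rfl fun i _ => ?_
              have := (hpos i).ne'
              simp only [hu]
              field_simp
            rw [e, ← hσ]
            field_simp
        _ = s ^ (n + 3) / c ^ (n + 1) := by
            rw [div_pow]
            field_simp
            ring
    have e : s ^ (n + 3) / (((n : ℝ) + 3) * c ^ (n + 1))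
        = (s ^ (n + 3) / c ^ (n + 1)) / ((n : ℝ) + 3) := by
      rw [div_div]; ring_nf
    rw [hrp n, e, ← Finset.sum_div]
    exact (div_le_div_iff_of_pos_right (by positivity)).mpr hsumu
  have hb_nonneg : ∀ n : ℕ, 0 ≤ s ^ (n + 3) / (((n : ℝ) + 3) * θ 2 ^ (((n : ℝ) + 1) / 2)) := by
    intro n
    rw [hrp n]
    positivity
  have hb_summable : Summable (fun n : ℕ =>
      s ^ (n + 3) / (((n : ℝ) + 3) * θ 2 ^ (((n : ℝ) + 1) / 2))) := by
    refine Summable.of_nonneg_of_le hb_nonneg (fun n => ?_)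
      (summable_geometric_of_lt_one hs0.le hs1)
    have hd : (1 : ℝ) ≤ ((n : ℝ) + 3) * θ 2 ^ (((n : ℝ) + 1) / 2) := by
      rw [hrp n]
      have h1 : (1 : ℝ) ≤ c ^ (n + 1) := one_le_pow₀ hc1
      have h2 : (0 : ℝ) ≤ (n : ℝ) := Nat.cast_nonneg n
      nlinarith [h1, h2]
    calc s ^ (n + 3) / (((n : ℝ) + 3) * θ 2 ^ (((n : ℝ) + 1) / 2))
        ≤ s ^ (n + 3) / 1 :=
          div_le_div_of_nonneg_left (by positivity) one_pos hd
      _ = s ^ (n + 3) := div_one _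
      _ ≤ s ^ n := pow_le_pow_of_le_one hs0.le hs1.le (by omega)
  constructor
  · rw [← hA.tsum_eq]
    exact tsum_nonneg ha_nonneg
  · rw [← hA.tsum_eq]
    exact Summable.tsum_le_tsum hab hA.summable hb_summable
end

section
/- Let T = Σ_{i=1}^m Sᵢ with Sᵢ independent exponential of rate λᵢ, λ₁ = min λᵢ, t = E(T), σ² = Var(T), and suppose λ₁σ ≤ A. Then for any c > 0, P(T > t + cσ) ≥ (1/2) e^{-(1 + (c+1)A)}. -/
open MeasureTheory ProbabilityTheory

open scoped ENNReal NNReal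
open Real Set

lemma expMeasure_eq (r : ℝ) : expMeasure r = volume.withDensity (exponentialPDF r) := rfl

lemma exp_tail {r : ℝ} (hr : 0 < r) {x : ℝ} (hx : 0 ≤ x) :
    expMeasure r (Ioi x) = ENNReal.ofReal (Real.exp (-(r * x))) := by
  haveI := isProbabilityMeasure_expMeasure hr
  have hIic : expMeasure r (Iic x) = ENNReal.ofReal (1 - Real.exp (-(r * x))) := by
    rw [expMeasure_eq, withDensity_apply _ measurableSet_Iic,
      lintegral_exponentialPDF_eq_antiDeriv hr x, if_pos hx]
  have : Ioi x = (Iic x)ᶜ := by ext y; simp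
  rw [this, measure_compl measurableSet_Iic (measure_ne_top _ _), hIic]
  rw [measure_univ]
  have hle : Real.exp (-(r * x)) ≤ 1 := by
    apply Real.exp_le_one_iff.mpr; nlinarith
  rw [show (1 : ℝ≥0∞) = ENNReal.ofReal 1 by simp]
  rw [← ENNReal.ofReal_sub _ (by linarith)]
  congr 1
  ring

lemma exponentialPDFReal_def (r x : ℝ) :
    exponentialPDFReal r x = if 0 ≤ x then r * Real.exp (-(r * x)) else 0 := by
  rw [exponentialPDFReal, gammaPDFReal]
  simp only [rpow_one, Real.Gamma_one, div_one, sub_self, rpow_zero, mul_one]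

lemma integral_expMeasure (r : ℝ) (hr : 0 < r) (g : ℝ → ℝ) :
    ∫ x, g x ∂(expMeasure r) = ∫ x, exponentialPDFReal r x * g x := by
  have hpdf : exponentialPDF r = fun x => ((exponentialPDFReal r x).toNNReal : ℝ≥0∞) := by
    funext x; rfl
  rw [expMeasure_eq, show exponentialPDF r = fun x => ((fun y => (exponentialPDFReal r y).toNNReal) x : ℝ≥0∞) from hpdf]
  rw [integral_withDensity_eq_integral_smul
    ((measurable_exponentialPDFReal r).real_toNNReal) g]
  congr 1
  funext x
  rw [NNReal.smul_def, Real.coe_toNNReal _ (exponentialPDFReal_nonneg hr x)]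
  rfl

lemma integral_pow_expMeasure (r : ℝ) (hr : 0 < r) (k : ℕ) (hk : 0 < k) :
    ∫ x, x ^ k ∂(expMeasure r) = (k.factorial : ℝ) / r ^ k := by
  rw [integral_expMeasure r hr]
  have h1 : ∫ x, exponentialPDFReal r x * x ^ k
      = ∫ x in Ioi (0:ℝ), exponentialPDFReal r x * x ^ k := by
    rw [setIntegral_eq_integral_of_forall_compl_eq_zero]
    intro x hx
    simp only [mem_Ioi, not_lt] at hx
    rcases lt_or_eq_of_le hx with h | h
    · rw [exponentialPDFReal_def, if_neg (by linarith)]; ring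
    · rw [h]; simp [zero_pow hk.ne']
  rw [h1]
  have h2 : ∫ x in Ioi (0:ℝ), exponentialPDFReal r x * x ^ k
      = r * ∫ x in Ioi (0:ℝ), x ^ ((k + 1 : ℝ) - 1) * Real.exp (-(r * x)) := by
    rw [← integral_const_mul]
    apply setIntegral_congr_fun measurableSet_Ioi
    intro x hx
    simp only [exponentialPDFReal_def, if_pos (le_of_lt (mem_Ioi.mp hx)),
      show (k + 1 : ℝ) - 1 = (k : ℝ) by ring, Real.rpow_natCast]
    ring
  rw [h2, integral_rpow_mul_exp_neg_mul_Ioi (by positivity) hr]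
  rw [show (k + 1 : ℝ) = ((k + 1 : ℕ) : ℝ) by push_cast; ring, Real.rpow_natCast]
  rw [show ((k + 1 : ℕ) : ℝ) = (k : ℝ) + 1 by push_cast; ring, Real.Gamma_nat_eq_factorial]
  push_cast
  field_simp
  rw [div_pow, one_pow]; field_simp
  ring

lemma integrable_pow_expMeasure (r : ℝ) (hr : 0 < r) (k : ℕ) (hk : 0 < k) :
    Integrable (fun x : ℝ => x ^ k) (expMeasure r) := by
  have hpdf : exponentialPDF r = fun x => ((fun y => (exponentialPDFReal r y).toNNReal) x : ℝ≥0∞) := by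
    funext x; rfl
  rw [expMeasure_eq, hpdf, integrable_withDensity_iff_integrable_smul
    ((measurable_exponentialPDFReal r).real_toNNReal)]
  have heq : (fun x : ℝ => (exponentialPDFReal r x).toNNReal • x ^ k)
      = Set.indicator (Ioi (0:ℝ)) (fun x => r * Real.exp (-(r * x)) * x ^ k) := by
    funext x
    rw [NNReal.smul_def, Real.coe_toNNReal _ (exponentialPDFReal_nonneg hr x), smul_eq_mul]
    rcases lt_trichotomy x 0 with h | h | h
    · rw [Set.indicator_of_notMem (by simp [h.le, not_lt.mpr h.le]), exponentialPDFReal_def,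
        if_neg (by linarith)]
      ring
    · rw [h, Set.indicator_of_notMem (by simp), zero_pow hk.ne']
      ring
    · rw [Set.indicator_of_mem (Set.mem_Ioi.mpr h), exponentialPDFReal_def, if_pos h.le]
  rw [heq, integrable_indicator_iff measurableSet_Ioi]
  have base : IntegrableOn (fun x : ℝ => x ^ (k:ℝ) * Real.exp (-r * x ^ (1:ℝ))) (Ioi 0) :=
    integrableOn_rpow_mul_exp_neg_mul_rpow (lt_of_lt_of_le neg_one_lt_zero (Nat.cast_nonneg k)) zero_lt_one hr
  refine IntegrableOn.congr_fun (base.const_mul r) ?_ measurableSet_Ioi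
  intro x hx
  simp only [Real.rpow_one, Real.rpow_natCast, neg_mul]
  ring

lemma memLp_pow_expMeasure (r : ℝ) (hr : 0 < r) :
    MemLp (id : ℝ → ℝ) 2 (expMeasure r) := by
  rw [memLp_two_iff_integrable_sq aestronglyMeasurable_id]
  simpa using integrable_pow_expMeasure r hr 2 (by norm_num)

lemma cantelli_half {Ω : Type*} [MeasurableSpace Ω] (μ : Measure Ω) [IsProbabilityMeasure μ]
    {Y : Ω → ℝ} (hY : MemLp Y 2 μ) {σ : ℝ} (hσ : 0 < σ)
    (hv : variance Y μ ≤ σ ^ 2) :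
    (μ {ω | Y ω ≤ (∫ x, Y x ∂μ) - σ}).toReal ≤ 1 / 2 := by
  set mY := ∫ x, Y x ∂μ with hmY
  set c := mY + σ with hc
  set Z : Ω → ℝ := fun ω => c - Y ω with hZ
  have hZmem : MemLp Z 2 μ := (memLp_const c).sub hY
  have hYint : Integrable Y μ := hY.integrable one_le_two
  have hY2int : Integrable (fun ω => Y ω ^ 2) μ := hY.integrable_sq
  have hZ2int : Integrable (fun ω => Z ω ^ 2) μ := hZmem.integrable_sq
  -- ∫ Z² = σ² + variance Y
  have hvar : variance Y μ = (∫ ω, Y ω ^ 2 ∂μ) - mY ^ 2 := by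
    have := variance_eq_sub hY
    simpa [hmY] using this
  have hintZ2 : ∫ ω, Z ω ^ 2 ∂μ = σ ^ 2 + variance Y μ := by
    have hexp : ∀ ω, Z ω ^ 2 = c ^ 2 - 2 * c * Y ω + Y ω ^ 2 := by
      intro ω; simp only [hZ]; ring
    calc ∫ ω, Z ω ^ 2 ∂μ = ∫ ω, (c ^ 2 - 2 * c * Y ω + Y ω ^ 2) ∂μ := by
          exact integral_congr_ae (Filter.Eventually.of_forall hexp)
      _ = (∫ ω, (c ^ 2 - 2 * c * Y ω) ∂μ) + ∫ ω, Y ω ^ 2 ∂μ := by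
          exact integral_add ((integrable_const _).sub (hYint.const_mul _)) hY2int
      _ = (∫ ω, (c ^ 2 : ℝ) ∂μ) - (∫ ω, 2 * c * Y ω ∂μ) + ∫ ω, Y ω ^ 2 ∂μ := by
          rw [integral_sub (integrable_const _) (hYint.const_mul _)]
      _ = c ^ 2 - 2 * c * mY + ∫ ω, Y ω ^ 2 ∂μ := by
          rw [integral_const, integral_const_mul]
          simp [hmY]
      _ = σ ^ 2 + variance Y μ := by rw [hvar]; simp only [hc]; ring
  have hbound : ∫ ω, Z ω ^ 2 ∂μ ≤ 2 * σ ^ 2 := by linarith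
  -- Markov
  have hmarkov := mul_meas_ge_le_integral_of_nonneg
    (Filter.Eventually.of_forall (fun ω => sq_nonneg (Z ω))) hZ2int ((2 * σ) ^ 2)
  have hsubset : {ω | Y ω ≤ mY - σ} ⊆ {ω | (2 * σ) ^ 2 ≤ Z ω ^ 2} := by
    intro ω hω
    simp only [Set.mem_setOf_eq] at hω ⊢
    have h1 : 2 * σ ≤ Z ω := by simp only [hZ, hc]; linarith
    nlinarith
  have hmono : (μ {ω | Y ω ≤ mY - σ}).toReal ≤ (μ {ω | (2 * σ) ^ 2 ≤ Z ω ^ 2}).toReal :=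
    ENNReal.toReal_mono (measure_ne_top _ _) (measure_mono hsubset)
  have h4σ : (0:ℝ) < (2 * σ) ^ 2 := by positivity
  have : (2 * σ) ^ 2 * (μ {ω | (2 * σ) ^ 2 ≤ Z ω ^ 2}).toReal ≤ 2 * σ ^ 2 :=
    le_trans hmarkov hbound
  have h2 : (μ {ω | (2 * σ) ^ 2 ≤ Z ω ^ 2}).toReal ≤ 2 * σ ^ 2 / (2 * σ) ^ 2 := by
    rw [le_div_iff₀ h4σ]; linarith
  calc (μ {ω | Y ω ≤ mY - σ}).toReal ≤ 2 * σ ^ 2 / (2 * σ) ^ 2 := le_trans hmono h2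
    _ = 1 / 2 := by field_simp

/-- Lower tail bound: if `T = ∑ Sᵢ` with `Sᵢ` independent exponentials of rates
`λ₁ ≤ ⋯ ≤ λ_m`, `t = E(T)`, `σ² = Var(T)`, and `λ₁σ ≤ A`, then for any `c > 0`,
`P(T > t + cσ) ≥ (1/2) e^{-(1+(c+1)A)}`. -/
theorem tail_lower_bound {Ω : Type*} [MeasurableSpace Ω]
    (μ : Measure Ω) [IsProbabilityMeasure μ]
    (m : ℕ) (hm : 0 < m) (lam : Fin m → ℝ)
    (hpos : ∀ i, 0 < lam i) (hmono : Monotone lam)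
    (S : Fin m → Ω → ℝ) (hmeas : ∀ i, Measurable (S i))
    (hindep : iIndepFun S μ)
    (hdist : ∀ i, μ.map (S i) = expMeasure (lam i))
    (t σ A : ℝ) (hσ0 : 0 < σ)
    (ht : t = ∑ i, 1 / lam i) (hσ : σ ^ 2 = ∑ i, 1 / lam i ^ 2)
    (hA : lam ⟨0, hm⟩ * σ ≤ A) :
    ∀ c : ℝ, 0 < c →
      (μ {ω | (∑ i, S i ω) > t + c * σ}).toReal ≥
        (1 / 2) * Real.exp (-(1 + (c + 1) * A)) := by
  intro c hc
  classical
  set i0 : Fin m := ⟨0, hm⟩ with hi0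
  have hl1pos : 0 < lam i0 := hpos i0
  -- L² membership
  have hl2 : ∀ i, MemLp (S i) 2 μ := by
    intro i
    have h1 : MemLp id 2 (μ.map (S i)) := by
      rw [hdist i]; exact memLp_pow_expMeasure _ (hpos i)
    have h2 := (memLp_map_measure_iff aestronglyMeasurable_id (hmeas i).aemeasurable).mp h1
    simpa [Function.comp] using h2
  -- mean and second moment of each coordinate
  have hmean : ∀ i, ∫ ω, S i ω ∂μ = 1 / lam i := by
    intro i
    have h0 : ∫ x, x ∂(μ.map (S i)) = 1 / lam i := by
      rw [hdist i]
      have := integral_pow_expMeasure (lam i) (hpos i) 1 one_pos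
      simpa using this
    have h1 := integral_map (μ := μ) (f := fun x : ℝ => x) (hmeas i).aemeasurable
      measurable_id.aestronglyMeasurable
    rw [← h1]
    exact h0
  have hsq : ∀ i, ∫ ω, (S i ω) ^ 2 ∂μ = 2 / lam i ^ 2 := by
    intro i
    have h0 : ∫ x, x ^ 2 ∂(μ.map (S i)) = 2 / lam i ^ 2 := by
      rw [hdist i]
      have := integral_pow_expMeasure (lam i) (hpos i) 2 (by norm_num)
      norm_num at this
      exact this
    have h1 := integral_map (μ := μ) (f := fun x : ℝ => x ^ 2) (hmeas i).aemeasurable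
      (measurable_id.pow_const 2).aestronglyMeasurable
    rw [← h1]
    exact h0
  have hvar : ∀ i, variance (S i) μ = 1 / lam i ^ 2 := by
    intro i
    rw [variance_eq_sub (hl2 i)]
    have h1 := hmean i
    have h2 := hsq i
    have hli := (hpos i).ne'
    simp only [Pi.pow_apply]
    rw [h2, h1]
    field_simp
    ring
  -- the sum over the rest
  set s : Finset (Fin m) := Finset.univ.erase i0 with hsdef
  set Y : Ω → ℝ := ∑ i ∈ s, S i with hYdef
  have hYapp : ∀ ω, Y ω = ∑ i ∈ s, S i ω := by
    intro ω; rw [hYdef]; simp [Finset.sum_apply]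
  have hYmeas : Measurable Y := by
    have h := Finset.measurable_sum s (fun i _ => hmeas i)
    have : Y = fun ω => ∑ i ∈ s, S i ω := funext hYapp
    rw [this]; exact h
  have hYl2 : MemLp Y 2 μ := memLp_finset_sum' s (fun i _ => hl2 i)
  have hEY : ∫ ω, Y ω ∂μ = t - 1 / lam i0 := by
    have h1 : ∫ ω, Y ω ∂μ = ∑ i ∈ s, ∫ ω, S i ω ∂μ := by
      rw [show (∫ ω, Y ω ∂μ) = ∫ ω, ∑ i ∈ s, S i ω ∂μ from integral_congr_ae
        (Filter.Eventually.of_forall (fun ω => hYapp ω))]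
      exact integral_finset_sum s (fun i _ => (hl2 i).integrable one_le_two)
    rw [h1]
    have h2 : ∑ i ∈ s, ∫ ω, S i ω ∂μ = ∑ i ∈ s, 1 / lam i :=
      Finset.sum_congr rfl (fun i _ => hmean i)
    rw [h2, ht]
    have h3 := Finset.add_sum_erase Finset.univ (fun i => 1 / lam i) (Finset.mem_univ i0)
    rw [hsdef]
    linarith
  have hVarY : variance Y μ ≤ σ ^ 2 := by
    have h1 : variance Y μ = ∑ i ∈ s, variance (S i) μ := by
      rw [hYdef]
      exact IndepFun.variance_sum (fun i _ => hl2 i)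
        (fun i _ j _ hij => hindep.indepFun hij)
    rw [h1, hσ]
    refine Finset.sum_le_sum_of_subset_of_nonneg (Finset.subset_univ s) ?_ |>.trans_eq ?_
    · intro i _ _
      rw [hvar i]
      positivity
    · exact Finset.sum_congr rfl (fun i _ => (hvar i).symm) |>.symm ▸ rfl
  -- events
  set a : ℝ := 1 / lam i0 + (c + 1) * σ with ha
  have ha0 : 0 ≤ a := by
    have h1 : 0 < 1 / lam i0 := one_div_pos.mpr hl1pos
    have h2 : 0 < (c + 1) * σ := mul_pos (by linarith) hσ0
    rw [ha]; linarith
  set b : ℝ := (t - 1 / lam i0) - σ with hb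
  have hind : IndepFun Y (S i0) μ := by
    rw [hYdef]
    exact hindep.indepFun_finset_sum_of_notMem hmeas (Finset.notMem_erase i0 Finset.univ)
  have hinter := hind.meas_inter (s := Y ⁻¹' Set.Ioi b) (t := S i0 ⁻¹' Set.Ioi a)
    ⟨Set.Ioi b, measurableSet_Ioi, rfl⟩ ⟨Set.Ioi a, measurableSet_Ioi, rfl⟩
  have hsub : Y ⁻¹' Set.Ioi b ∩ S i0 ⁻¹' Set.Ioi a ⊆ {ω | (∑ i, S i ω) > t + c * σ} := by
    rintro ω ⟨h1, h2⟩
    simp only [Set.mem_preimage, Set.mem_Ioi] at h1 h2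
    simp only [Set.mem_setOf_eq]
    have hsum : ∑ i, S i ω = S i0 ω + Y ω := by
      rw [hYapp ω, hsdef]
      exact (Finset.add_sum_erase Finset.univ (fun i => S i ω) (Finset.mem_univ i0)).symm
    rw [hsum, ha] at *
    rw [hb] at h1
    linarith
  have hμA : μ (S i0 ⁻¹' Set.Ioi a) = ENNReal.ofReal (Real.exp (-(lam i0 * a))) := by
    rw [← Measure.map_apply (hmeas i0) measurableSet_Ioi, hdist i0]
    exact exp_tail hl1pos ha0
  have hBcompl : μ (Y ⁻¹' Set.Ioi b) = 1 - μ {ω | Y ω ≤ b} := by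
    have heq : Y ⁻¹' Set.Ioi b = {ω | Y ω ≤ b}ᶜ := by ext ω; simp [not_le]
    rw [heq, measure_compl (measurableSet_le hYmeas measurable_const) (measure_ne_top _ _),
      measure_univ]
  have hcant : (μ {ω | Y ω ≤ b}).toReal ≤ 1 / 2 := by
    have h := cantelli_half μ hYl2 hσ0 hVarY
    rw [hEY, ← hb] at h
    exact h
  have hμB : 1 / 2 ≤ (μ (Y ⁻¹' Set.Ioi b)).toReal := by
    rw [hBcompl, ENNReal.toReal_sub_of_le prob_le_one ENNReal.one_ne_top]
    simp only [ENNReal.toReal_one]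
    linarith
  have hle1 : ENNReal.toReal (μ (Y ⁻¹' Set.Ioi b ∩ S i0 ⁻¹' Set.Ioi a)) ≤
      (μ {ω | (∑ i, S i ω) > t + c * σ}).toReal :=
    ENNReal.toReal_mono (measure_ne_top _ _) (measure_mono hsub)
  rw [hinter, ENNReal.toReal_mul, hμA, ENNReal.toReal_ofReal (Real.exp_nonneg _)] at hle1
  have hexp : Real.exp (-(1 + (c + 1) * A)) ≤ Real.exp (-(lam i0 * a)) := by
    apply Real.exp_le_exp.mpr
    have h1 : lam i0 * (1 / lam i0) = 1 := by field_simp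
    have h2 : (c + 1) * (lam i0 * σ) ≤ (c + 1) * A :=
      mul_le_mul_of_nonneg_left hA (by linarith)
    rw [ha]
    nlinarith
  have final : (1 / 2) * Real.exp (-(1 + (c + 1) * A)) ≤
      (μ (Y ⁻¹' Set.Ioi b)).toReal * Real.exp (-(lam i0 * a)) :=
    mul_le_mul hμB hexp (Real.exp_nonneg _) ENNReal.toReal_nonneg
  exact le_trans final hle1
end

section
/- For the Bernoulli–Laplace model with 0 < 2r ≤ n, t_{n,r} := r(n-r) Σ_{i=1}^r 1/(i(n-i+1)) satisfies t_{n,r} = (r(n-r)/n)(log r + O(1)) uniformly in r ≤ n/2 as r → ∞; more precisely, there is a constant C such that |t_{n,r} n/(r(n-r)) - Σ_{i=1}^r 1/i| ≤ C for all n, r with 0 < 2r ≤ n. -/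
open Finset

/-- For the Bernoulli–Laplace model, with
`t_{n,r} = r(n-r) ∑_{i=1}^r 1/(i(n-i+1))`, there is a constant `C` such that
`|t_{n,r} · n/(r(n-r)) - ∑_{i=1}^r 1/i| ≤ C` for all `n, r` with `0 < 2r ≤ n`. -/
theorem bernoulli_laplace_time_asymptotics :
    ∃ C : ℝ, ∀ n r : ℕ, 0 < r → 2 * r ≤ n →
      |((r : ℝ) * ((n : ℝ) - (r : ℝ)) *
          ∑ i ∈ Icc 1 r, 1 / ((i : ℝ) * ((n : ℝ) - (i : ℝ) + 1))) *
            (n : ℝ) / ((r : ℝ) * ((n : ℝ) - (r : ℝ))) -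
        ∑ i ∈ Icc 1 r, 1 / (i : ℝ)| ≤ C := by
  refine ⟨1, fun n r hr hrn => ?_⟩
  have hr1 : (1:ℝ) ≤ (r:ℝ) := by exact_mod_cast hr
  have hn : (2:ℝ) * r ≤ n := by exact_mod_cast hrn
  have hrpos : (0:ℝ) < r := by linarith
  have hnr : (0:ℝ) < (n:ℝ) - r := by linarith
  have hnpos : (0:ℝ) < n := by linarith
  have hA : (r:ℝ) * ((n:ℝ) - r) ≠ 0 := ne_of_gt (mul_pos hrpos hnr)
  set S := ∑ i ∈ Icc 1 r, 1 / ((i : ℝ) * ((n : ℝ) - (i : ℝ) + 1)) with hS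
  have hcancel : ((r:ℝ) * ((n:ℝ) - r) * S) * n / ((r:ℝ) * ((n:ℝ) - r)) = (n:ℝ) * S := by
    field_simp
  rw [hcancel, hS, Finset.mul_sum, ← Finset.sum_sub_distrib]
  have key : ∀ i ∈ Icc 1 r,
      (n:ℝ) * (1 / ((i : ℝ) * ((n : ℝ) - (i : ℝ) + 1))) - 1 / (i:ℝ) ∈ Set.Icc (0:ℝ) (2 / n) := by
    intro i hi
    simp only [Finset.mem_Icc] at hi
    obtain ⟨hi1, hi2⟩ := hi
    have hi1' : (1:ℝ) ≤ (i:ℝ) := by exact_mod_cast hi1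
    have hi2' : (i:ℝ) ≤ r := by exact_mod_cast hi2
    have hipos : (0:ℝ) < i := by linarith
    have hd : (0:ℝ) < (n:ℝ) - i + 1 := by linarith
    have heq : (n:ℝ) * (1 / ((i : ℝ) * ((n : ℝ) - (i : ℝ) + 1))) - 1 / (i:ℝ)
        = ((i:ℝ) - 1) / ((i:ℝ) * ((n:ℝ) - i + 1)) := by
      field_simp
      ring
    rw [heq]
    constructor
    · apply div_nonneg (by linarith) (le_of_lt (mul_pos hipos hd))
    · rw [div_le_div_iff₀ (mul_pos hipos hd) hnpos]
      nlinarith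
  calc |∑ i ∈ Icc 1 r, ((n:ℝ) * (1 / ((i : ℝ) * ((n : ℝ) - (i : ℝ) + 1))) - 1 / (i:ℝ))|
      ≤ ∑ i ∈ Icc 1 r, |(n:ℝ) * (1 / ((i : ℝ) * ((n : ℝ) - (i : ℝ) + 1))) - 1 / (i:ℝ)| :=
        Finset.abs_sum_le_sum_abs _ _
    _ ≤ ∑ i ∈ Icc 1 r, (2 / (n:ℝ)) := by
        apply Finset.sum_le_sum
        intro i hi
        obtain ⟨h0, h1⟩ := key i hi
        rw [abs_of_nonneg h0]; exact h1
    _ = (r:ℝ) * (2 / n) := by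
        rw [Finset.sum_const, Nat.card_Icc]
        simp [nsmul_eq_mul]
    _ ≤ 1 := by
        rw [mul_div_assoc'] at *
        rw [div_le_one hnpos]
        linarith
end
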